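/- There is a universal constant c > 0 such that the following holds for every Steiner forest instance (M, D) with n demand pairs presented online. Run the clustering procedure after each arrival t (1 ≤ t ≤ n) on the prefix instance (M^(t), D^(t)), yielding clusterings 𝒞^(t)_i and virtual graphs H^(t)_i, with the conventions 𝒞^(t)_i := 𝒞^(t)_{L^(t)+1} and H^(t)_i := ∅ for i > L^(t), and 𝒞^(0)_i, H^(0)_i, F̂^(0)_i empty. Suppose for each t and each level i a spanning forest F̂^(t)_i of H^(t)_i is chosen so that it contains as a subset a spanning forest F̂^(t)_{inh,i} of the subgraph of H^(t)_i induced by the inherited virtual edges, where a virtual edge (D_1, D_2) of H^(t)_i is called inherited if some edge (C_1, C_2) ∈ F̂^(t−1)_i has C_1 and C_2 contained in the distinct clusters D_1 and D_2 of 𝒞^(t)_i respectively. Then for every level i, Σ_{t=1}^{n} |F̂^(t)_i \ F̂^(t)_{inh,i}| · 2^{i+1} ≤ c · OPT_n. -/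

import Mathlib

open Finset

/-- A Steiner forest instance with `n` demand pairs: a metric on the `2n` terminals
`Fin n × Bool` in which all distances between distinct points are at least `1`.
The `i`-th demand pair is `((i, false), (i, true))`. -/
structure SFI (n : ℕ) where
  dist : Fin n × Bool → Fin n × Bool → ℝ
  dist_self : ∀ x, dist x x = 0
  dist_symm : ∀ x y, dist x y = dist y x
  dist_triangle : ∀ x y z, dist x z ≤ dist x y + dist y z
  one_le_dist : ∀ x y, x ≠ y → 1 ≤ dist x y

namespace SFI

/-- Terminals. -/
abbrev Pt (n : ℕ) := Fin n × Bool

variable {n : ℕ}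

/-- The mate of a terminal. -/
def mate (v : Pt n) : Pt n := (v.1, !v.2)

/-- `level v = ⌈log₂ dist(v, mate v)⌉`. -/
noncomputable def level (M : SFI n) (v : Pt n) : ℕ :=
  ⌈Real.logb 2 (M.dist v (mate v))⌉₊

/-- The level of a cluster: maximum level of its terminals. -/
noncomputable def clLevel (M : SFI n) (C : Set (Pt n)) : ℕ := sSup (M.level '' C)

/-- A cluster is `i`-active if its level is at least `i`. -/
def Active (M : SFI n) (i : ℕ) (C : Set (Pt n)) : Prop := i ≤ M.clLevel C

/-- `L`, the maximum level of a terminal. -/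
noncomputable def maxLevel (M : SFI n) : ℕ := sSup (Set.range M.level)

/-- The contracted metric `M/𝒞`: the distance between clusters `C, C'` is the minimum over
sequences of clusters `C = Q_0, …, Q_k = C'` and points `x_j ∈ Q_{j-1}`, `y_j ∈ Q_j`
of `∑ dist (x j) (y j)`. -/
noncomputable def cDist (M : SFI n) (𝒞 : Set (Set (Pt n))) (C C' : Set (Pt n)) : ℝ :=
  sInf {s | ∃ (k : ℕ) (Q : Fin (k+1) → Set (Pt n)) (x y : Fin k → Pt n),
    (∀ j, Q j ∈ 𝒞) ∧ Q 0 = C ∧ Q (Fin.last k) = C' ∧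
    (∀ j : Fin k, x j ∈ Q j.castSucc ∧ y j ∈ Q j.succ) ∧
    s = ∑ j, M.dist (x j) (y j)}

/-- Adjacency of the virtual graph `H_i` on a clustering `𝒞`: two distinct `i`-active
clusters of `𝒞` are adjacent iff their distance in `M/𝒞` is `< 2^(i+1)`
(the distance is symmetric; both directions are recorded to make symmetry definitional). -/
def hRel (M : SFI n) (𝒞 : Set (Set (Pt n))) (i : ℕ) (C₁ C₂ : Set (Pt n)) : Prop :=
  C₁ ∈ 𝒞 ∧ C₂ ∈ 𝒞 ∧ C₁ ≠ C₂ ∧ M.Active i C₁ ∧ M.Active i C₂ ∧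
    M.cDist 𝒞 C₁ C₂ < 2 ^ (i+1) ∧ M.cDist 𝒞 C₂ C₁ < 2 ^ (i+1)

/-- One step of the clustering procedure: keep the `i`-inactive clusters, and merge each
connected component of the virtual graph `H_i` into a single cluster. -/
def step (M : SFI n) (𝒞 : Set (Set (Pt n))) (i : ℕ) : Set (Set (Pt n)) :=
  {C | C ∈ 𝒞 ∧ ¬ M.Active i C} ∪
  {D | ∃ C, C ∈ 𝒞 ∧ M.Active i C ∧
    D = ⋃₀ {C' | Relation.ReflTransGen (M.hRel 𝒞 i) C C'}}

/-- The clustering hierarchy of the instance restricted to the terminal set `S`: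
`𝒞_0` is the trivial clustering of `S`; `𝒞_{i+1}` is obtained from `𝒞_i` by merging the
connected components of `H_i`. (For `i` beyond the top level this is constant.) -/
def clusterings (M : SFI n) (S : Set (Pt n)) : ℕ → Set (Set (Pt n))
  | 0 => {C | ∃ v ∈ S, C = {v}}
  | (i+1) => M.step (M.clusterings S i) i

/-- The virtual graph `H_i` as a simple graph on clusters. -/
def virtG (M : SFI n) (S : Set (Pt n)) (i : ℕ) : SimpleGraph (Set (Pt n)) where
  Adj C₁ C₂ := M.hRel (M.clusterings S i) i C₁ C₂
  symm := by
    constructor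
    rintro C₁ C₂ ⟨h1, h2, h3, h4, h5, h6, h7⟩
    exact ⟨h2, h1, h3.symm, h5, h4, h7, h6⟩
  loopless := by
    constructor
    rintro C ⟨h1, h2, h3, _⟩
    exact h3 rfl

/-- Cost of an edge of the complete graph on the terminals. -/
noncomputable def ecost (M : SFI n) (e : Sym2 (Pt n)) : ℝ :=
  Sym2.lift ⟨M.dist, M.dist_symm⟩ e

/-- Cost of a set of edges. -/
noncomputable def cost (M : SFI n) (F : Finset (Sym2 (Pt n))) : ℝ := ∑ e ∈ F, M.ecost e

/-- A set of edges is feasible if every demand pair is connected by it. -/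
def Feasible (M : SFI n) (F : Finset (Sym2 (Pt n))) : Prop :=
  ∀ i : Fin n,
    (SimpleGraph.fromEdgeSet (F : Set (Sym2 (Pt n)))).Reachable (i, false) (i, true)

/-- The optimum cost of a feasible solution. -/
noncomputable def OPT (M : SFI n) : ℝ := sInf {x | ∃ F, M.Feasible F ∧ M.cost F = x}

end SFI

namespace SFI

variable {n : ℕ}

/-- `F` is a spanning forest of the graph `H`: an acyclic subgraph whose connected
components coincide with those of `H`. -/
def IsSpanningForest {α : Type*} (H F : SimpleGraph α) : Prop :=
  F ≤ H ∧ F.IsAcyclic ∧ ∀ a b, F.Reachable a b ↔ H.Reachable a b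

/-- The subgraph of the virtual graph `H_i` (of the instance restricted to `S`) formed by
the edges inherited from the forest `F'` chosen at the previous arrival: a virtual edge
`(D₁, D₂)` of `H_i` is inherited if some edge `(C₁, C₂)` of `F'` has `C₁` and `C₂`
contained in the distinct clusters `D₁` and `D₂` respectively. -/
def inhG (M : SFI n) (S : Set (Pt n)) (i : ℕ)
    (F' : SimpleGraph (Set (Pt n))) : SimpleGraph (Set (Pt n)) where
  Adj D₁ D₂ := (M.virtG S i).Adj D₁ D₂ ∧ ∃ C₁ C₂, F'.Adj C₁ C₂ ∧ C₁ ⊆ D₁ ∧ C₂ ⊆ D₂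
  symm := by
    constructor
    rintro D₁ D₂ ⟨h, C₁, C₂, hF, hc₁, hc₂⟩
    exact ⟨h.symm, C₂, C₁, hF.symm, hc₂, hc₁⟩
  loopless := ⟨fun D h => (M.virtG S i).irrefl h.1⟩

end SFI


open SimpleGraph

section GraphCount

variable {V : Type*}

lemma sf_card_lt_of_surj_not_inj {α β : Type*} [Finite α] (f : α → β)
    (hs : Function.Surjective f) {a a' : α} (hne : a ≠ a') (he : f a = f a') :
    Nat.card β < Nat.card α := by
  classical
  have : Finite β := Finite.of_surjective f hs
  have := Fintype.ofFinite α
  have := Fintype.ofFinite β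
  rw [Nat.card_eq_fintype_card, Nat.card_eq_fintype_card]
  exact Fintype.card_lt_of_surjective_not_injective f hs
    (fun hinj => hne (hinj he))

/-- The map on connected components induced by `F₀ ≤ F`. -/
noncomputable def ccMap {F₀ F : SimpleGraph V} (h : F₀ ≤ F) :
    F₀.ConnectedComponent → F.ConnectedComponent :=
  ConnectedComponent.lift (fun v => F.connectedComponentMk v)
    (fun _ _ p _ => ConnectedComponent.sound (p.mapLe h).reachable)

lemma ccMap_mk {F₀ F : SimpleGraph V} (h : F₀ ≤ F) (v : V) :
    ccMap h (F₀.connectedComponentMk v) = F.connectedComponentMk v := rfl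

lemma ccMap_surj {F₀ F : SimpleGraph V} (h : F₀ ≤ F) :
    Function.Surjective (ccMap h) := by
  intro κ
  obtain ⟨v, rfl⟩ := κ.exists_rep
  exact ⟨F₀.connectedComponentMk v, rfl⟩

lemma cc_card_le [Finite V] {F₀ F : SimpleGraph V} (h : F₀ ≤ F) :
    Nat.card F.ConnectedComponent ≤ Nat.card F₀.ConnectedComponent :=
  Nat.card_le_card_of_surjective _ (ccMap_surj h)

lemma fromEdgeSet_single_le {F : SimpleGraph V} {e : Sym2 V} (he : e ∈ F.edgeSet) :
    fromEdgeSet {e} ≤ F := by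
  intro a b hab
  rw [fromEdgeSet_adj] at hab
  obtain ⟨h1, _⟩ := hab
  rw [Set.mem_singleton_iff] at h1
  rw [← mem_edgeSet, h1]
  exact he

/-- Counting lemma: if `F` is acyclic and `F₀ ≤ F` then
`|E(F) \ E(F₀)| + #CC(F) ≤ #CC(F₀)`. -/
lemma forest_diff [Finite V] {F F₀ : SimpleGraph V} (hac : F.IsAcyclic) (hle : F₀ ≤ F) :
    (F.edgeSet \ F₀.edgeSet).ncard + Nat.card F.ConnectedComponent
      ≤ Nat.card F₀.ConnectedComponent := by
  classical
  generalize hd : (F.edgeSet \ F₀.edgeSet).ncard = d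
  induction d generalizing F₀ with
  | zero => simpa using cc_card_le hle
  | succ d ih =>
    have hne : (F.edgeSet \ F₀.edgeSet).Nonempty :=
      Set.nonempty_of_ncard_ne_zero (by omega)
    obtain ⟨e, he⟩ := hne
    have heF : e ∈ F.edgeSet := he.1
    have heF₀ : e ∉ F₀.edgeSet := he.2
    set F₁ : SimpleGraph V := F₀ ⊔ fromEdgeSet {e} with hF₁
    have hle1 : F₁ ≤ F := sup_le hle (fromEdgeSet_single_le heF)
    have hE₁ : F₁.edgeSet = F₀.edgeSet ∪ {e} := by
      rw [hF₁, edgeSet_sup, edgeSet_fromEdgeSet]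
      have hdiag : ({e} : Set (Sym2 V)) \ {e' | e'.IsDiag} = {e} := by
        ext x
        simp only [Set.mem_diff, Set.mem_singleton_iff, Set.mem_setOf_eq,
          and_iff_left_iff_imp]
        rintro rfl
        exact F.not_isDiag_of_mem_edgeSet heF
      rw [show Sym2.diagSet = {e' : Sym2 V | e'.IsDiag} from rfl, hdiag]
    have hdiff : F.edgeSet \ F₁.edgeSet = (F.edgeSet \ F₀.edgeSet) \ {e} := by
      rw [hE₁]; ext x
      simp only [Set.mem_diff, Set.mem_union, Set.mem_singleton_iff]
      tauto
    have hd1 : (F.edgeSet \ F₁.edgeSet).ncard = d := by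
      rw [hdiff, Set.ncard_diff_singleton_of_mem he, hd]
      omega
    have hstep := ih hle1 hd1
    -- now show Nat.card F₁.CC < Nat.card F₀.CC
    induction e using Sym2.ind with
    | _ a b =>
      have hab : F.Adj a b := heF
      have hne' : a ≠ b := hab.ne
      have hbridge := (isAcyclic_iff_forall_edge_isBridge.mp hac) heF
      rw [isBridge_iff] at hbridge
      have hnr : ¬ F₀.Reachable a b := by
        intro hr
        apply hbridge
        apply hr.mono
        intro x y hxy
        rw [deleteEdges, sdiff_adj]
        refine ⟨hle hxy, ?_⟩
        rw [fromEdgeSet_adj]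
        rintro ⟨h1, -⟩
        rw [Set.mem_singleton_iff] at h1
        apply heF₀
        rw [← h1]
        exact hxy
      have hmkne : F₀.connectedComponentMk a ≠ F₀.connectedComponentMk b := by
        intro hmk
        exact hnr (ConnectedComponent.exact hmk)
      have hadj1 : F₁.Adj a b := by
        rw [hF₁, sup_adj, fromEdgeSet_adj]
        exact Or.inr ⟨rfl, hne'⟩
      have hmkeq : ccMap (le_sup_left : F₀ ≤ F₁) (F₀.connectedComponentMk a)
          = ccMap (le_sup_left : F₀ ≤ F₁) (F₀.connectedComponentMk b) := by
        rw [ccMap_mk, ccMap_mk]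
        exact ConnectedComponent.sound hadj1.reachable
      have hlt : Nat.card F₁.ConnectedComponent < Nat.card F₀.ConnectedComponent :=
        sf_card_lt_of_surj_not_inj _ (ccMap_surj _) hmkne hmkeq
      omega

/-- Spanning forests have the same number of connected components as their host
graph. -/
lemma cc_card_eq_of_reach_iff {H F : SimpleGraph V}
    (hle : F ≤ H) (hiff : ∀ a b, F.Reachable a b ↔ H.Reachable a b) :
    Nat.card F.ConnectedComponent = Nat.card H.ConnectedComponent := by
  classical
  let f : F.ConnectedComponent → H.ConnectedComponent :=
    ConnectedComponent.lift (fun v => H.connectedComponentMk v)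
      (fun _ _ p _ => ConnectedComponent.sound (p.mapLe hle).reachable)
  let g : H.ConnectedComponent → F.ConnectedComponent :=
    ConnectedComponent.lift (fun v => F.connectedComponentMk v)
      (fun v w p _ => ConnectedComponent.sound ((hiff v w).mpr p.reachable))
  have hfg : ∀ κ, f (g κ) = κ := by
    intro κ; obtain ⟨v, rfl⟩ := κ.exists_rep; rfl
  have hgf : ∀ κ, g (f κ) = κ := by
    intro κ; obtain ⟨v, rfl⟩ := κ.exists_rep; rfl
  exact Nat.card_congr ⟨f, g, hgf, hfg⟩

/-- Number of connected components meeting a set `A`. -/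
noncomputable def compsOn (G : SimpleGraph V) (A : Set V) : ℕ :=
  (G.connectedComponentMk '' A).ncard

lemma isolated_reachable {G : SimpleGraph V} {A : Set V}
    (hA : ∀ x y, G.Adj x y → x ∈ A) {x y : V} (hx : x ∉ A) (h : G.Reachable x y) :
    x = y := by
  obtain ⟨p⟩ := h
  cases p with
  | nil => rfl
  | cons h q => exact absurd (hA _ _ h) hx

lemma cc_card_decomp [Finite V] (G : SimpleGraph V) (A : Set V)
    (hA : ∀ x y, G.Adj x y → x ∈ A) :
    Nat.card G.ConnectedComponent = compsOn G A + Nat.card {x : V // x ∉ A} := by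
  classical
  have hAs : ∀ x y, G.Adj x y → x ∈ A ∧ y ∈ A :=
    fun x y h => ⟨hA x y h, hA y x h.symm⟩
  let f : (G.connectedComponentMk '' A) ⊕ {x : V // x ∉ A} → G.ConnectedComponent :=
    Sum.elim (fun κ => κ.1) (fun x => G.connectedComponentMk x.1)
  have hbij : Function.Bijective f := by
    constructor
    · rintro (⟨κ, hκ⟩ | ⟨x, hx⟩) (⟨κ', hκ'⟩ | ⟨x', hx'⟩) h
      · simpa [f] using h
      · exfalso
        obtain ⟨v, hv, rfl⟩ := hκ
        simp only [f, Sum.elim_inl, Sum.elim_inr] at h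
        have hveq : x' = v := isolated_reachable (fun a b hab => hA a b hab) hx'
          (ConnectedComponent.exact h).symm
        exact hx' (hveq ▸ hv)
      · exfalso
        obtain ⟨v, hv, rfl⟩ := hκ'
        simp only [f, Sum.elim_inl, Sum.elim_inr] at h
        have hveq : x = v := isolated_reachable (fun a b hab => hA a b hab) hx
          (ConnectedComponent.exact h.symm).symm
        exact hx (hveq ▸ hv)
      · simp only [f, Sum.elim_inr] at h
        have := isolated_reachable (fun a b hab => hA a b hab) hx
          (ConnectedComponent.exact h)
        simp [this]
    · intro κ
      obtain ⟨v, rfl⟩ := κ.exists_rep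
      by_cases hv : v ∈ A
      · exact ⟨Sum.inl ⟨_, Set.mem_image_of_mem _ hv⟩, rfl⟩
      · exact ⟨Sum.inr ⟨v, hv⟩, rfl⟩
  have := Nat.card_congr (Equiv.ofBijective f hbij)
  rw [Nat.card_sum] at this
  rw [← this, compsOn, ← Nat.card_coe_set_eq]

end GraphCount

namespace SFI

variable {n : ℕ} (M : SFI n)

lemma dist_nonneg' (x y : Pt n) : 0 ≤ M.dist x y := by
  have h := M.dist_triangle x y x
  rw [M.dist_self, M.dist_symm y x] at h
  linarith

lemma mate_ne (v : Pt n) : mate v ≠ v := by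
  intro h
  have := congrArg Prod.snd h
  simp [mate] at this

lemma one_le_dist_mate (v : Pt n) : 1 ≤ M.dist v (mate v) :=
  M.one_le_dist _ _ (Ne.symm (mate_ne v))

lemma dist_mate_pos (v : Pt n) : 0 < M.dist v (mate v) :=
  lt_of_lt_of_le one_pos (M.one_le_dist_mate v)

lemma dist_mate_gt_of_level {v : Pt n} {j : ℕ} (h : j + 1 ≤ M.level v) :
    (2 : ℝ) ^ j < M.dist v (mate v) := by
  have hj : (j : ℝ) < Real.logb 2 (M.dist v (mate v)) := by
    have := Nat.lt_ceil.mp (lt_of_lt_of_le (Nat.lt_succ_self j) h)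
    exact this
  have hpos := M.dist_mate_pos v
  have h2 : (2 : ℝ) ^ (j : ℝ) < (2:ℝ) ^ (Real.logb 2 (M.dist v (mate v))) :=
    (Real.rpow_lt_rpow_left_iff (by norm_num)).mpr hj
  rw [Real.rpow_logb (by norm_num) (by norm_num) hpos] at h2
  rwa [Real.rpow_natCast] at h2

lemma clLevel_witness {C : Set (Pt n)} (hne : C.Nonempty) {i : ℕ}
    (h : i ≤ M.clLevel C) : ∃ v ∈ C, i ≤ M.level v := by
  have hmem : sSup (M.level '' C) ∈ M.level '' C :=
    Set.Nonempty.csSup_mem (hne.image _) ((C.toFinite).image _)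
  obtain ⟨v, hv, heq⟩ := hmem
  exact ⟨v, hv, heq ▸ h⟩

lemma active_of_mem {C : Set (Pt n)} {v : Pt n} (hv : v ∈ C) {i : ℕ}
    (h : i ≤ M.level v) : M.Active i C :=
  le_trans h (le_csSup ((C.toFinite).image _).bddAbove (Set.mem_image_of_mem _ hv))

lemma active_mono {C D : Set (Pt n)} (hsub : C ⊆ D) (hne : C.Nonempty) {i : ℕ}
    (h : M.Active i C) : M.Active i D := by
  obtain ⟨v, hv, hlev⟩ := M.clLevel_witness hne h
  exact M.active_of_mem (hsub hv) hlev

/-- `𝒞` is a partition of `S` into nonempty clusters. -/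
def IsPart (S : Set (Pt n)) (𝒞 : Set (Set (Pt n))) : Prop :=
  (∀ C ∈ 𝒞, C ⊆ S ∧ C.Nonempty) ∧ ∀ v ∈ S, ∃! C, C ∈ 𝒞 ∧ v ∈ C

lemma IsPart.unique_of_subset {S : Set (Pt n)} {𝒞 : Set (Set (Pt n))}
    (hp : IsPart S 𝒞) {x D₁ D₂ : Set (Pt n)} (hx : x.Nonempty)
    (h1 : D₁ ∈ 𝒞) (h2 : D₂ ∈ 𝒞) (hs1 : x ⊆ D₁) (hs2 : x ⊆ D₂) : D₁ = D₂ := by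
  obtain ⟨v, hv⟩ := hx
  obtain ⟨C, -, huniq⟩ := hp.2 v ((hp.1 D₁ h1).1 (hs1 hv))
  rw [huniq D₁ ⟨h1, hs1 hv⟩, huniq D₂ ⟨h2, hs2 hv⟩]

lemma hRel_symm (𝒞 : Set (Set (Pt n))) (i : ℕ) : Symmetric (M.hRel 𝒞 i) := by
  rintro C₁ C₂ ⟨h1, h2, h3, h4, h5, h6, h7⟩
  exact ⟨h2, h1, h3.symm, h5, h4, h7, h6⟩

lemma comp_spec {𝒞 : Set (Set (Pt n))} {i : ℕ} {C C' : Set (Pt n)}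
    (h : Relation.ReflTransGen (M.hRel 𝒞 i) C C') :
    C' = C ∨ (C' ∈ 𝒞 ∧ M.Active i C') := by
  rcases Relation.ReflTransGen.cases_tail h with h | ⟨b, -, hr⟩
  · exact Or.inl h
  · exact Or.inr ⟨hr.2.1, hr.2.2.2.2.1⟩

lemma comp_eq {𝒞 : Set (Set (Pt n))} {i : ℕ} {C C' : Set (Pt n)}
    (h : Relation.ReflTransGen (M.hRel 𝒞 i) C C') :
    {X | Relation.ReflTransGen (M.hRel 𝒞 i) C X}
      = {X | Relation.ReflTransGen (M.hRel 𝒞 i) C' X} := by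
  ext X
  constructor
  · intro hX
    exact ((@Relation.ReflTransGen.stdSymm _ (M.hRel 𝒞 i) ⟨fun a b hab => M.hRel_symm 𝒞 i hab⟩).symm _ _ h).trans hX
  · intro hX
    exact h.trans hX

lemma mem_step_iff {𝒞 : Set (Set (Pt n))} {i : ℕ} {C : Set (Pt n)} :
    C ∈ M.step 𝒞 i ↔ (C ∈ 𝒞 ∧ ¬ M.Active i C) ∨
      ∃ C₀, C₀ ∈ 𝒞 ∧ M.Active i C₀ ∧
        C = ⋃₀ {C' | Relation.ReflTransGen (M.hRel 𝒞 i) C₀ C'} := Iff.rfl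

lemma isPart_step {S : Set (Pt n)} {𝒞 : Set (Set (Pt n))} (hp : IsPart S 𝒞)
    (i : ℕ) : IsPart S (M.step 𝒞 i) := by
  constructor
  · intro C hC
    rcases (M.mem_step_iff).mp hC with ⟨h1, -⟩ | ⟨C₀, h₀, hact, rfl⟩
    · exact hp.1 C h1
    · constructor
      · intro p hp'
        obtain ⟨C', hC', hpC'⟩ := hp'
        rcases M.comp_spec hC' with rfl | ⟨hmem, -⟩
        · exact (hp.1 _ h₀).1 hpC'
        · exact (hp.1 _ hmem).1 hpC'
      · obtain ⟨v, hv⟩ := (hp.1 _ h₀).2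
        exact ⟨v, C₀, Relation.ReflTransGen.refl, hv⟩
  · intro v hv
    obtain ⟨C₀, ⟨hC₀, hvC₀⟩, huniq⟩ := hp.2 v hv
    by_cases hact : M.Active i C₀
    · refine ⟨⋃₀ {C' | Relation.ReflTransGen (M.hRel 𝒞 i) C₀ C'},
        ⟨Or.inr ⟨C₀, hC₀, hact, rfl⟩, ⟨C₀, Relation.ReflTransGen.refl, hvC₀⟩⟩, ?_⟩
      rintro E ⟨hE, hvE⟩
      rcases (M.mem_step_iff).mp hE with ⟨h1, hina⟩ | ⟨C₁, h₁, hact₁, rfl⟩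
      · exact absurd (huniq E ⟨h1, hvE⟩ ▸ hact) hina
      · obtain ⟨C₂, hC₂, hvC₂⟩ := hvE
        have hC₂mem : C₂ ∈ 𝒞 := by
          rcases M.comp_spec hC₂ with rfl | ⟨hm, -⟩
          · exact h₁
          · exact hm
        have : C₂ = C₀ := huniq C₂ ⟨hC₂mem, hvC₂⟩
        subst this
        rw [M.comp_eq hC₂]
    · refine ⟨C₀, ⟨Or.inl ⟨hC₀, hact⟩, hvC₀⟩, ?_⟩
      rintro E ⟨hE, hvE⟩
      rcases (M.mem_step_iff).mp hE with ⟨h1, -⟩ | ⟨C₁, h₁, hact₁, rfl⟩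
      · exact huniq E ⟨h1, hvE⟩
      · obtain ⟨C₂, hC₂, hvC₂⟩ := hvE
        rcases M.comp_spec hC₂ with rfl | ⟨hm, hact₂⟩
        · exact absurd (huniq C₂ ⟨h₁, hvC₂⟩ ▸ hact₁) hact
        · exact absurd (huniq C₂ ⟨hm, hvC₂⟩ ▸ hact₂) hact

lemma isPart_clusterings (S : Set (Pt n)) (i : ℕ) :
    IsPart S (M.clusterings S i) := by
  induction i with
  | zero =>
    constructor
    · rintro C ⟨v, hv, rfl⟩
      exact ⟨Set.singleton_subset_iff.mpr hv, ⟨v, rfl⟩⟩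
    · intro v hv
      refine ⟨{v}, ⟨⟨v, hv, rfl⟩, rfl⟩, ?_⟩
      rintro E ⟨⟨w, hw, rfl⟩, hvE⟩
      rw [Set.mem_singleton_iff] at hvE
      rw [hvE]
  | succ i ih => exact M.isPart_step ih i

lemma step_refine {𝒞 : Set (Set (Pt n))} {i : ℕ} {C : Set (Pt n)} (hC : C ∈ 𝒞) :
    ∃ D ∈ M.step 𝒞 i, C ⊆ D := by
  by_cases hact : M.Active i C
  · exact ⟨⋃₀ {C' | Relation.ReflTransGen (M.hRel 𝒞 i) C C'},
      Or.inr ⟨C, hC, hact, rfl⟩,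
      fun p hp => ⟨C, Relation.ReflTransGen.refl, hp⟩⟩
  · exact ⟨C, Or.inl ⟨hC, hact⟩, subset_rfl⟩

lemma cDist_bddBelow (𝒞 : Set (Set (Pt n))) (C C' : Set (Pt n)) :
    BddBelow {s | ∃ (k : ℕ) (Q : Fin (k+1) → Set (Pt n)) (x y : Fin k → Pt n),
      (∀ j, Q j ∈ 𝒞) ∧ Q 0 = C ∧ Q (Fin.last k) = C' ∧
      (∀ j : Fin k, x j ∈ Q j.castSucc ∧ y j ∈ Q j.succ) ∧
      s = ∑ j, M.dist (x j) (y j)} := by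
  refine ⟨0, ?_⟩
  rintro s ⟨k, Q, x, y, -, -, -, -, rfl⟩
  exact Finset.sum_nonneg fun j _ => M.dist_nonneg' _ _

lemma chain_mem_two {𝒞 : Set (Set (Pt n))} {C C' : Set (Pt n)}
    (hC : C ∈ 𝒞) (hC' : C' ∈ 𝒞) {v w : Pt n} (hv : v ∈ C) (hw : w ∈ C') :
    M.dist v w ∈ {s | ∃ (k : ℕ) (Q : Fin (k+1) → Set (Pt n)) (x y : Fin k → Pt n),
      (∀ j, Q j ∈ 𝒞) ∧ Q 0 = C ∧ Q (Fin.last k) = C' ∧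
      (∀ j : Fin k, x j ∈ Q j.castSucc ∧ y j ∈ Q j.succ) ∧
      s = ∑ j, M.dist (x j) (y j)} := by
  refine ⟨1, fun j => if j = 0 then C else C', fun _ => v, fun _ => w, ?_, ?_, ?_, ?_, ?_⟩
  · intro j
    by_cases h : j = 0 <;> simp [h, hC, hC']
  · simp
  · simp [Fin.last]
  · intro j
    have hj : j = 0 := Subsingleton.elim _ _
    subst hj
    constructor
    · simp [Fin.castSucc]
      exact hv
    · have : (0 : Fin 1).succ ≠ (0 : Fin 2) := Fin.succ_ne_zero 0
      simp [this]
      exact hw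
  · simp

lemma cDist_le_dist {𝒞 : Set (Set (Pt n))} {C C' : Set (Pt n)}
    (hC : C ∈ 𝒞) (hC' : C' ∈ 𝒞) {v w : Pt n} (hv : v ∈ C) (hw : w ∈ C') :
    M.cDist 𝒞 C C' ≤ M.dist v w :=
  csInf_le (M.cDist_bddBelow 𝒞 C C') (M.chain_mem_two hC hC' hv hw)

lemma cDist_mono {S' : Set (Pt n)} {𝒞 𝒞' : Set (Set (Pt n))}
    (hp' : IsPart S' 𝒞') (hne : ∀ Q ∈ 𝒞, Set.Nonempty Q)
    (hmap : ∀ Q ∈ 𝒞, ∃ D ∈ 𝒞', Q ⊆ D)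
    {x y X Y : Set (Pt n)} (hx : x ∈ 𝒞) (hy : y ∈ 𝒞)
    (hX : X ∈ 𝒞') (hY : Y ∈ 𝒞') (hxX : x ⊆ X) (hyY : y ⊆ Y) :
    M.cDist 𝒞' X Y ≤ M.cDist 𝒞 x y := by
  apply le_csInf
  · obtain ⟨v, hv⟩ := hne x hx
    obtain ⟨w, hw⟩ := hne y hy
    exact ⟨M.dist v w, M.chain_mem_two hx hy hv hw⟩
  · rintro s ⟨k, Q, xs, ys, hQ, hQ0, hQl, hxy, rfl⟩
    have hch : ∀ j, ∃ D ∈ 𝒞', Q j ⊆ D := fun j => hmap (Q j) (hQ j)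
    choose D hD hQD using hch
    have hD0 : D 0 = X := by
      apply hp'.unique_of_subset (hne (Q 0) (hQ 0)) (hD 0) hX (hQD 0)
      rw [hQ0]; exact hxX
    have hDl : D (Fin.last k) = Y := by
      apply hp'.unique_of_subset (hne (Q (Fin.last k)) (hQ (Fin.last k)))
        (hD _) hY (hQD _)
      rw [hQl]; exact hyY
    exact csInf_le (M.cDist_bddBelow 𝒞' X Y)
      ⟨k, D, xs, ys, hD, hD0, hDl, fun j => ⟨hQD _ (hxy j).1, hQD _ (hxy j).2⟩, rfl⟩

lemma clusterings_mono {S S' : Set (Pt n)} (hS : S ⊆ S') (i : ℕ) :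
    ∀ C ∈ M.clusterings S i, ∃ D ∈ M.clusterings S' i, C ⊆ D := by
  induction i with
  | zero =>
    rintro C ⟨v, hv, rfl⟩
    exact ⟨{v}, ⟨v, hS hv, rfl⟩, subset_rfl⟩
  | succ i ih =>
    have hp : IsPart S (M.clusterings S i) := M.isPart_clusterings S i
    have hp' : IsPart S' (M.clusterings S' i) := M.isPart_clusterings S' i
    have hne : ∀ Q ∈ M.clusterings S i, Set.Nonempty Q := fun Q hQ => (hp.1 Q hQ).2
    choose φ hφmem hφsub using ih
    have htrans : ∀ C₁ C₂ (h1 : C₁ ∈ M.clusterings S i) (h2 : C₂ ∈ M.clusterings S i),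
        M.hRel (M.clusterings S i) i C₁ C₂ →
        (φ C₁ h1 = φ C₂ h2 ∨ M.hRel (M.clusterings S' i) i (φ C₁ h1) (φ C₂ h2)) := by
      intro C₁ C₂ h1 h2 hr
      obtain ⟨-, -, hne12, hact1, hact2, hd1, hd2⟩ := hr
      by_cases heq : φ C₁ h1 = φ C₂ h2
      · exact Or.inl heq
      · refine Or.inr ⟨hφmem C₁ h1, hφmem C₂ h2, heq,
          M.active_mono (hφsub C₁ h1) (hne _ h1) hact1,
          M.active_mono (hφsub C₂ h2) (hne _ h2) hact2, ?_, ?_⟩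
        · exact lt_of_le_of_lt (M.cDist_mono hp' hne (fun Q hQ => ⟨φ Q hQ, hφmem Q hQ, hφsub Q hQ⟩)
            h1 h2 (hφmem C₁ h1) (hφmem C₂ h2) (hφsub C₁ h1) (hφsub C₂ h2)) hd1
        · exact lt_of_le_of_lt (M.cDist_mono hp' hne (fun Q hQ => ⟨φ Q hQ, hφmem Q hQ, hφsub Q hQ⟩)
            h2 h1 (hφmem C₂ h2) (hφmem C₁ h1) (hφsub C₂ h2) (hφsub C₁ h1)) hd2
    rintro C (⟨hC, hina⟩ | ⟨C₀, hC₀, hact, rfl⟩)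
    · obtain ⟨E, hE, hsub⟩ := M.step_refine (i := i) (hφmem C hC)
      exact ⟨E, hE, (hφsub C hC).trans hsub⟩
    · refine ⟨⋃₀ {X | Relation.ReflTransGen (M.hRel (M.clusterings S' i) i) (φ C₀ hC₀) X},
        Or.inr ⟨φ C₀ hC₀, hφmem C₀ hC₀,
          M.active_mono (hφsub C₀ hC₀) (hne _ hC₀) hact, rfl⟩, ?_⟩
      have key : ∀ C', Relation.ReflTransGen (M.hRel (M.clusterings S i) i) C₀ C' →
          ∃ h' : C' ∈ M.clusterings S i,
            Relation.ReflTransGen (M.hRel (M.clusterings S' i) i) (φ C₀ hC₀) (φ C' h') := by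
        intro C' hC'
        induction hC' with
        | refl => exact ⟨hC₀, Relation.ReflTransGen.refl⟩
        | tail hab hbc ih2 =>
          obtain ⟨hb, hrtg⟩ := ih2
          have hc : _ ∈ M.clusterings S i := hbc.2.1
          rcases htrans _ _ hb hc hbc with heq | hrel
          · exact ⟨hc, heq ▸ hrtg⟩
          · exact ⟨hc, hrtg.tail hrel⟩
      rintro p ⟨C', hC'comp, hpC'⟩
      obtain ⟨h', hrtg⟩ := key C' hC'comp
      exact ⟨φ C' h', hrtg, hφsub C' h' hpC'⟩

lemma clusterings_empty (i : ℕ) : M.clusterings (∅ : Set (Pt n)) i = ∅ := by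
  induction i with
  | zero =>
    ext C
    simp [clusterings]
  | succ i ih =>
    ext C
    rw [show M.clusterings (∅ : Set (Pt n)) (i+1) = M.step (M.clusterings ∅ i) i from rfl, ih]
    simp only [Set.mem_empty_iff_false, iff_false]
    rintro (⟨h, -⟩ | ⟨C₀, h, -⟩) <;> simp at h

/-- Separation: terminals of level `≥ i` lying in distinct clusters of `𝒞_{i+1}`
are at distance at least `2^(i+1)`. -/
lemma sep {S : Set (Pt n)} {i : ℕ} {D D' : Set (Pt n)}
    (hD : D ∈ M.clusterings S (i+1)) (hD' : D' ∈ M.clusterings S (i+1))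
    (hne : D ≠ D') {v w : Pt n} (hv : v ∈ D) (hw : w ∈ D')
    (hlv : i ≤ M.level v) (hlw : i ≤ M.level w) :
    (2 : ℝ) ^ (i+1) ≤ M.dist v w := by
  have hp : IsPart S (M.clusterings S i) := M.isPart_clusterings S i
  have hps : IsPart S (M.clusterings S (i+1)) := M.isPart_clusterings S (i+1)
  have hvS : v ∈ S := (hps.1 D hD).1 hv
  have hwS : w ∈ S := (hps.1 D' hD').1 hw
  obtain ⟨Cv, ⟨hCv, hvCv⟩, -⟩ := hp.2 v hvS
  obtain ⟨Cw, ⟨hCw, hwCw⟩, -⟩ := hp.2 w hwS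
  obtain ⟨Ev, hEv, hCvEv⟩ := M.step_refine (i := i) hCv
  obtain ⟨Ew, hEw, hCwEw⟩ := M.step_refine (i := i) hCw
  obtain ⟨Duniq, -, huniqv⟩ := hps.2 v hvS
  obtain ⟨Duniq', -, huniqw⟩ := hps.2 w hwS
  have hEvD : Ev = D := by
    rw [huniqv Ev ⟨hEv, hCvEv hvCv⟩, huniqv D ⟨hD, hv⟩]
  have hEwD : Ew = D' := by
    rw [huniqw Ew ⟨hEw, hCwEw hwCw⟩, huniqw D' ⟨hD', hw⟩]
  have hCvD : Cv ⊆ D := hEvD ▸ hCvEv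
  have hCwD : Cw ⊆ D' := hEwD ▸ hCwEw
  have hCvCw : Cv ≠ Cw := by
    intro h
    apply hne
    have hwD : w ∈ D := hCvD (h ▸ hwCw)
    rw [huniqw D ⟨hD, hwD⟩, huniqw D' ⟨hD', hw⟩]
  have hactv : M.Active i Cv := M.active_of_mem hvCv hlv
  have hactw : M.Active i Cw := M.active_of_mem hwCw hlw
  -- D is the component union of Cv if Cv is active
  have hDcomp : D = ⋃₀ {C' | Relation.ReflTransGen (M.hRel (M.clusterings S i) i) Cv C'} := by
    rcases (M.mem_step_iff).mp hD with ⟨h1, hina⟩ | ⟨C₀, h₀, hact₀, rfl⟩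
    · exfalso
      apply hina
      obtain ⟨Cu, -, huniq'⟩ := hp.2 v hvS
      have : D = Cv := by rw [huniq' D ⟨h1, hv⟩, huniq' Cv ⟨hCv, hvCv⟩]
      rw [this]; exact hactv
    · obtain ⟨C₂, hC₂, hvC₂⟩ := hv
      have hC₂mem : C₂ ∈ M.clusterings S i := by
        rcases M.comp_spec hC₂ with rfl | ⟨hm, -⟩
        · exact h₀
        · exact hm
      obtain ⟨Cu, -, huniq'⟩ := hp.2 v hvS
      have hC₂Cv : C₂ = Cv := by rw [huniq' C₂ ⟨hC₂mem, hvC₂⟩, huniq' Cv ⟨hCv, hvCv⟩]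
      rw [M.comp_eq (hC₂Cv ▸ hC₂)]
  have hD'comp : D' = ⋃₀ {C' | Relation.ReflTransGen (M.hRel (M.clusterings S i) i) Cw C'} := by
    rcases (M.mem_step_iff).mp hD' with ⟨h1, hina⟩ | ⟨C₀, h₀, hact₀, rfl⟩
    · exfalso
      apply hina
      obtain ⟨Cu, -, huniq'⟩ := hp.2 w hwS
      have : D' = Cw := by rw [huniq' D' ⟨h1, hw⟩, huniq' Cw ⟨hCw, hwCw⟩]
      rw [this]; exact hactw
    · obtain ⟨C₂, hC₂, hwC₂⟩ := hw
      have hC₂mem : C₂ ∈ M.clusterings S i := by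
        rcases M.comp_spec hC₂ with rfl | ⟨hm, -⟩
        · exact h₀
        · exact hm
      obtain ⟨Cu, -, huniq'⟩ := hp.2 w hwS
      have hC₂Cw : C₂ = Cw := by rw [huniq' C₂ ⟨hC₂mem, hwC₂⟩, huniq' Cw ⟨hCw, hwCw⟩]
      rw [M.comp_eq (hC₂Cw ▸ hC₂)]
  have hnrel : ¬ M.hRel (M.clusterings S i) i Cv Cw := by
    intro hrel
    apply hne
    rw [hDcomp, hD'comp, M.comp_eq (Relation.ReflTransGen.single hrel)]
  have hdist : ¬ (M.cDist (M.clusterings S i) Cv Cw < 2 ^ (i+1) ∧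
      M.cDist (M.clusterings S i) Cw Cv < 2 ^ (i+1)) := by
    intro ⟨h6, h7⟩
    exact hnrel ⟨hCv, hCw, hCvCw, hactv, hactw, h6, h7⟩
  rw [not_and_or, not_lt, not_lt] at hdist
  rcases hdist with h | h
  · exact le_trans h (M.cDist_le_dist hCv hCw hvCv hwCw)
  · calc (2:ℝ)^(i+1) ≤ M.cDist (M.clusterings S i) Cw Cv := h
      _ ≤ M.dist w v := M.cDist_le_dist hCw hCv hwCw hvCv
      _ = M.dist v w := M.dist_symm w v

end SFI

namespace SFI

attribute [local instance] Classical.propDecidable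

variable {n : ℕ} (M : SFI n)

lemma ecost_mk (a b : Pt n) : M.ecost s(a, b) = M.dist a b := rfl

lemma ecost_nonneg (e : Sym2 (Pt n)) : 0 ≤ M.ecost e := by
  induction e using Sym2.ind with
  | _ a b => exact M.dist_nonneg' a b

lemma cost_nonneg (F : Finset (Sym2 (Pt n))) : 0 ≤ M.cost F :=
  Finset.sum_nonneg fun e _ => M.ecost_nonneg e

lemma walk_charge {F : Finset (Sym2 (Pt n))} (v : Pt n) (R : ℝ)
    {w u : Pt n} (p : (SimpleGraph.fromEdgeSet (F : Set (Sym2 (Pt n)))).Walk w u)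
    (hnd : p.edges.Nodup) (hu : ¬ M.dist v u < R) :
    R - M.dist v w ≤
      ∑ e ∈ p.edges.toFinset.filter (fun e => ∃ x ∈ e, M.dist v x < R), M.ecost e := by
  induction p with
  | nil =>
    simp only [SimpleGraph.Walk.edges_nil, List.toFinset_nil, Finset.filter_empty,
      Finset.sum_empty]
    rw [not_lt] at hu
    linarith
  | @cons w w' u h q ih =>
    rw [SimpleGraph.Walk.edges_cons, List.nodup_cons] at hnd
    obtain ⟨hhead, hq⟩ := hnd
    have ihq := ih hq hu
    by_cases hcw : M.dist v w < R
    · have htouch : ∃ x ∈ s(w, w'), M.dist v x < R :=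
        ⟨w, by rw [Sym2.mem_iff]; exact Or.inl rfl, hcw⟩
      rw [SimpleGraph.Walk.edges_cons, List.toFinset_cons, Finset.filter_insert,
        if_pos htouch, Finset.sum_insert (by
          simp only [Finset.mem_filter, List.mem_toFinset]
          exact fun hc => hhead hc.1)]
      have htri := M.dist_triangle v w w'
      have hec : M.ecost s(w, w') = M.dist w w' := rfl
      linarith
    · rw [not_lt] at hcw
      have hnn : (0:ℝ) ≤ ∑ e ∈ (SimpleGraph.Walk.cons h q).edges.toFinset.filter
          (fun e => ∃ x ∈ e, M.dist v x < R), M.ecost e :=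
        Finset.sum_nonneg fun e _ => M.ecost_nonneg e
      linarith

lemma packing {i : ℕ} {T : Set (Pt n)}
    (hlev : ∀ v ∈ T, (2:ℝ)^i / 2 < M.dist v (mate v))
    (hsep : ∀ v ∈ T, ∀ w ∈ T, v ≠ w → (2:ℝ)^i ≤ M.dist v w)
    {F : Finset (Sym2 (Pt n))} (hF : M.Feasible F) :
    (T.ncard : ℝ) * ((2:ℝ)^i / 2) ≤ 2 * M.cost F := by
  classical
  set R : ℝ := (2:ℝ)^i / 2 with hRdef
  have hR0 : 0 < R := by positivity
  set G := SimpleGraph.fromEdgeSet (F : Set (Sym2 (Pt n))) with hG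
  have hTfin : T.Finite := T.toFinite
  set T' : Finset (Pt n) := hTfin.toFinset with hT'
  have hcharge : ∀ v ∈ T',
      R ≤ ∑ e ∈ F.filter (fun e => ∃ x ∈ e, M.dist v x < R), M.ecost e := by
    intro v hv
    have hvT : v ∈ T := by rwa [hT', Set.Finite.mem_toFinset] at hv
    have hreach : G.Reachable v (mate v) := by
      obtain ⟨j, b⟩ := v
      cases b
      · exact hF j
      · exact (hF j).symm
    refine hreach.elim_path fun pp => ?_
    have hnd : pp.1.edges.Nodup := pp.2.isTrail.edges_nodup
    have hu : ¬ M.dist v (mate v) < R := not_lt.mpr (le_of_lt (hlev v hvT))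
    have hmain := M.walk_charge v R pp.1 hnd hu
    rw [M.dist_self] at hmain
    have hsub : pp.1.edges.toFinset.filter (fun e => ∃ x ∈ e, M.dist v x < R)
        ⊆ F.filter (fun e => ∃ x ∈ e, M.dist v x < R) := by
      intro e he
      rw [Finset.mem_filter] at he ⊢
      refine ⟨?_, he.2⟩
      have := pp.1.edges_subset_edgeSet (List.mem_toFinset.mp he.1)
      rw [hG, SimpleGraph.edgeSet_fromEdgeSet] at this
      exact this.1
    calc R = R - 0 := by ring
      _ ≤ _ := hmain
      _ ≤ _ := Finset.sum_le_sum_of_subset_of_nonneg hsub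
          (fun e _ _ => M.ecost_nonneg e)
  have hcard2 : ∀ e ∈ F,
      (T'.filter (fun v => ∃ x ∈ e, M.dist v x < R)).card ≤ 2 := by
    intro e _
    induction e using Sym2.ind with
    | _ a b =>
      have hsubu : T'.filter (fun v => ∃ x ∈ s(a,b), M.dist v x < R)
          ⊆ T'.filter (fun v => M.dist v a < R) ∪ T'.filter (fun v => M.dist v b < R) := by
        intro v hv
        rw [Finset.mem_filter] at hv
        obtain ⟨hvT, x, hx, hdx⟩ := hv
        rw [Sym2.mem_iff] at hx
        rw [Finset.mem_union, Finset.mem_filter, Finset.mem_filter]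
        rcases hx with rfl | rfl
        · exact Or.inl ⟨hvT, hdx⟩
        · exact Or.inr ⟨hvT, hdx⟩
      have h1 : ∀ c : Pt n, (T'.filter (fun v => M.dist v c < R)).card ≤ 1 := by
        intro c
        rw [Finset.card_le_one]
        intro x hx y hy
        rw [Finset.mem_filter] at hx hy
        by_contra hne
        have hxT : x ∈ T := by
          have := hx.1
          rwa [hT', Set.Finite.mem_toFinset] at this
        have hyT : y ∈ T := by
          have := hy.1
          rwa [hT', Set.Finite.mem_toFinset] at this
        have hsep' := hsep x hxT y hyT hne
        have htri := M.dist_triangle x c y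
        have hsymm : M.dist c y = M.dist y c := M.dist_symm c y
        have hx2 := hx.2
        have hy2 := hy.2
        rw [hRdef] at hx2 hy2
        linarith
      calc (T'.filter (fun v => ∃ x ∈ s(a,b), M.dist v x < R)).card
          ≤ (T'.filter (fun v => M.dist v a < R) ∪ T'.filter (fun v => M.dist v b < R)).card :=
            Finset.card_le_card hsubu
        _ ≤ _ + _ := Finset.card_union_le _ _
        _ ≤ 2 := by have := h1 a; have := h1 b; omega
  have hTcard : (T.ncard : ℝ) = (T'.card : ℝ) := by
    rw [Set.ncard_eq_toFinset_card T hTfin]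
  calc (T.ncard : ℝ) * R = ∑ _v ∈ T', R := by
        rw [Finset.sum_const, nsmul_eq_mul, hTcard]
    _ ≤ ∑ v ∈ T', ∑ e ∈ F.filter (fun e => ∃ x ∈ e, M.dist v x < R), M.ecost e :=
        Finset.sum_le_sum hcharge
    _ = ∑ v ∈ T', ∑ e ∈ F, if (∃ x ∈ e, M.dist v x < R) then M.ecost e else 0 := by
        refine Finset.sum_congr rfl fun v _ => ?_
        rw [Finset.sum_filter]
    _ = ∑ e ∈ F, ∑ v ∈ T', if (∃ x ∈ e, M.dist v x < R) then M.ecost e else 0 :=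
        Finset.sum_comm
    _ ≤ ∑ e ∈ F, 2 * M.ecost e := by
        refine Finset.sum_le_sum fun e he => ?_
        rw [← Finset.sum_filter, Finset.sum_const, nsmul_eq_mul]
        have := hcard2 e he
        have hnn := M.ecost_nonneg e
        have hc : ((T'.filter (fun v => ∃ x ∈ e, M.dist v x < R)).card : ℝ) ≤ 2 := by
          exact_mod_cast this
        nlinarith
    _ = 2 * M.cost F := by
        rw [cost, Finset.mul_sum]

lemma exists_feasible : ∃ F : Finset (Sym2 (Pt n)), M.Feasible F := by
  classical
  refine ⟨Finset.image (fun j : Fin n => s(((j : Fin n), false), ((j : Fin n), true)))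
    Finset.univ, ?_⟩
  intro j
  apply SimpleGraph.Adj.reachable
  rw [SimpleGraph.fromEdgeSet_adj]
  constructor
  · simp
  · intro h
    have := congrArg Prod.snd h
    simp at this

lemma le_OPT_of_forall {x : ℝ} (h : ∀ F, M.Feasible F → x ≤ M.cost F) :
    x ≤ M.OPT := by
  obtain ⟨F₀, hF₀⟩ := M.exists_feasible
  have hne : {x | ∃ F, M.Feasible F ∧ M.cost F = x}.Nonempty := ⟨M.cost F₀, F₀, hF₀, rfl⟩
  rw [OPT]
  apply le_csInf hne
  rintro y ⟨F, hF, rfl⟩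
  exact h F hF

end SFI

namespace SFI

variable {n : ℕ} (M : SFI n)

/-- The set of `i`-active clusters of the clustering of `S` at level `i`. -/
def acSet (S : Set (Pt n)) (i : ℕ) : Set (Set (Pt n)) :=
  {C | C ∈ M.clusterings S i ∧ M.Active i C}

lemma virtG_adj_mem {S : Set (Pt n)} {i : ℕ} {C₁ C₂ : Set (Pt n)}
    (h : (M.virtG S i).Adj C₁ C₂) : C₁ ∈ M.acSet S i := by
  obtain ⟨h1, -, -, h4, -⟩ := h
  exact ⟨h1, h4⟩

lemma inhG_adj_mem {S : Set (Pt n)} {i : ℕ} {F' : SimpleGraph (Set (Pt n))}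
    {C₁ C₂ : Set (Pt n)} (h : (M.inhG S i F').Adj C₁ C₂) : C₁ ∈ M.acSet S i :=
  M.virtG_adj_mem h.1

open Classical in
noncomputable def up (S' : Set (Pt n)) (i : ℕ) (C : Set (Pt n)) : Set (Pt n) :=
  if h : ∃ D ∈ M.clusterings S' i, C ⊆ D then h.choose else ∅

lemma up_spec {S S' : Set (Pt n)} (hS : S ⊆ S') {i : ℕ} {C : Set (Pt n)}
    (hC : C ∈ M.clusterings S i) :
    M.up S' i C ∈ M.clusterings S' i ∧ C ⊆ M.up S' i C := by
  have h : ∃ D ∈ M.clusterings S' i, C ⊆ D := M.clusterings_mono hS i C hC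
  rw [up, dif_pos h]
  exact ⟨h.choose_spec.1, h.choose_spec.2⟩

lemma up_eq {S S' : Set (Pt n)} (hS : S ⊆ S') {i : ℕ} {C D : Set (Pt n)}
    (hC : C ∈ M.clusterings S i) (hD : D ∈ M.clusterings S' i) (hsub : C ⊆ D) :
    M.up S' i C = D := by
  obtain ⟨h1, h2⟩ := M.up_spec hS hC
  exact (M.isPart_clusterings S' i).unique_of_subset
    ((M.isPart_clusterings S i).1 C hC).2 h1 hD h2 hsub

lemma up_active {S S' : Set (Pt n)} (hS : S ⊆ S') {i : ℕ} {C : Set (Pt n)}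
    (hC : C ∈ M.acSet S i) : M.up S' i C ∈ M.acSet S' i := by
  obtain ⟨h1, h2⟩ := M.up_spec hS hC.1
  exact ⟨h1, M.active_mono h2 ((M.isPart_clusterings S i).1 C hC.1).2 hC.2⟩

lemma edge_transfer {S S' : Set (Pt n)} (hS : S ⊆ S') {i : ℕ}
    {F' : SimpleGraph (Set (Pt n))} (hF' : F' ≤ M.virtG S i)
    {C₁ C₂ : Set (Pt n)} (hadj : F'.Adj C₁ C₂) :
    M.up S' i C₁ = M.up S' i C₂ ∨
      (M.inhG S' i F').Adj (M.up S' i C₁) (M.up S' i C₂) := by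
  have hv : (M.virtG S i).Adj C₁ C₂ := hF' hadj
  obtain ⟨h1, h2, hne, ha1, ha2, hd1, hd2⟩ := hv
  by_cases heq : M.up S' i C₁ = M.up S' i C₂
  · exact Or.inl heq
  · have hp' := M.isPart_clusterings S' i
    have hp := M.isPart_clusterings S i
    have hnecl : ∀ Q ∈ M.clusterings S i, Set.Nonempty Q := fun Q hQ => (hp.1 Q hQ).2
    have hmap : ∀ Q ∈ M.clusterings S i, ∃ D ∈ M.clusterings S' i, Q ⊆ D :=
      fun Q hQ => ⟨M.up S' i Q, (M.up_spec hS hQ).1, (M.up_spec hS hQ).2⟩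
    have hu1 := M.up_spec hS h1
    have hu2 := M.up_spec hS h2
    refine Or.inr ⟨⟨hu1.1, hu2.1, heq,
      M.active_mono hu1.2 (hnecl _ h1) ha1,
      M.active_mono hu2.2 (hnecl _ h2) ha2, ?_, ?_⟩, C₁, C₂, hadj, hu1.2, hu2.2⟩
    · exact lt_of_le_of_lt (M.cDist_mono hp' hnecl hmap h1 h2 hu1.1 hu2.1 hu1.2 hu2.2) hd1
    · exact lt_of_le_of_lt (M.cDist_mono hp' hnecl hmap h2 h1 hu2.1 hu1.1 hu2.2 hu1.2) hd2

lemma reach_transfer {S S' : Set (Pt n)} (hS : S ⊆ S') {i : ℕ}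
    {F' : SimpleGraph (Set (Pt n))} (hsf : IsSpanningForest (M.virtG S i) F')
    {C C' : Set (Pt n)} (hr : (M.virtG S i).Reachable C C') :
    (M.inhG S' i F').Reachable (M.up S' i C) (M.up S' i C') := by
  have hrF : F'.Reachable C C' := (hsf.2.2 _ _).mpr hr
  clear hr
  obtain ⟨p⟩ := hrF
  induction p with
  | nil => exact SimpleGraph.Reachable.refl _
  | cons h q ih =>
    rcases M.edge_transfer hS hsf.1 h with heq | hadj
    · rw [heq]; exact ih
    · exact hadj.reachable.trans ih

lemma count_forest {i : ℕ} {S : Set (Pt n)} {F' Fh Fi : SimpleGraph (Set (Pt n))}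
    (hFi : IsSpanningForest (M.inhG S i F') Fi)
    (hFh : IsSpanningForest (M.virtG S i) Fh) (hle : Fi ≤ Fh) :
    (Fh.edgeSet \ Fi.edgeSet).ncard + compsOn (M.virtG S i) (M.acSet S i)
      ≤ compsOn (M.inhG S i F') (M.acSet S i) := by
  have h1 := forest_diff hFh.2.1 hle
  rw [cc_card_eq_of_reach_iff hFh.1 hFh.2.2,
    cc_card_eq_of_reach_iff hFi.1 hFi.2.2] at h1
  rw [cc_card_decomp (M.virtG S i) (M.acSet S i)
      (fun x y h => M.virtG_adj_mem h),
    cc_card_decomp (M.inhG S i F') (M.acSet S i)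
      (fun x y h => M.inhG_adj_mem h)] at h1
  omega

lemma comps_transfer {S S' : Set (Pt n)} (hS : S ⊆ S') {i : ℕ}
    {F' : SimpleGraph (Set (Pt n))} (hsf : IsSpanningForest (M.virtG S i) F') :
    compsOn (M.inhG S' i F') (M.acSet S' i)
      ≤ compsOn (M.virtG S i) (M.acSet S i)
        + {D | D ∈ M.acSet S' i ∧ ¬ ∃ C ∈ M.acSet S i, C ⊆ D}.ncard := by
  classical
  set news := {D | D ∈ M.acSet S' i ∧ ¬ ∃ C ∈ M.acSet S i, C ⊆ D} with hnews
  set tgt := (M.inhG S' i F').connectedComponentMk '' (M.acSet S' i) with htgt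
  set src := (M.virtG S i).connectedComponentMk '' (M.acSet S i) with hsrc
  have hffin : Finite (Set (Pt n)) := inferInstance
  let f : ↥src ⊕ ↥news → ↥tgt := fun z =>
    match z with
    | Sum.inl κ =>
      ⟨(M.inhG S' i F').connectedComponentMk (M.up S' i κ.2.choose),
        Set.mem_image_of_mem _ (M.up_active hS κ.2.choose_spec.1)⟩
    | Sum.inr D => ⟨(M.inhG S' i F').connectedComponentMk D.1,
        Set.mem_image_of_mem _ D.2.1⟩
  have hsurj : Function.Surjective f := by
    rintro ⟨κ', hκ'⟩
    obtain ⟨D, hD, hmk⟩ := hκ'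
    by_cases hnew : ∃ C ∈ M.acSet S i, C ⊆ D
    · obtain ⟨C, hC, hCD⟩ := hnew
      refine ⟨Sum.inl ⟨(M.virtG S i).connectedComponentMk C,
        Set.mem_image_of_mem _ hC⟩, ?_⟩
      apply Subtype.ext
      simp only [f]
      set hmem := (⟨(M.virtG S i).connectedComponentMk C,
        Set.mem_image_of_mem _ hC⟩ : ↥src).2 with hh
      obtain ⟨hC₀mem, hC₀mk⟩ := hmem.choose_spec
      have hreach : (M.virtG S i).Reachable hmem.choose C :=
        SimpleGraph.ConnectedComponent.exact hC₀mk
      have := M.reach_transfer hS hsf hreach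
      have hupCD : M.up S' i C = D := M.up_eq hS hC.1 hD.1 hCD
      rw [← hmk, ← hupCD]
      exact SimpleGraph.ConnectedComponent.sound this
    · exact ⟨Sum.inr ⟨D, hD, hnew⟩, Subtype.ext hmk⟩
  have hcard := Nat.card_le_card_of_surjective f hsurj
  rw [Nat.card_sum] at hcard
  calc compsOn (M.inhG S' i F') (M.acSet S' i) = Nat.card ↥tgt := by
        rw [compsOn, htgt, Nat.card_coe_set_eq]
    _ ≤ Nat.card ↥src + Nat.card ↥news := hcard
    _ = _ := by rw [Nat.card_coe_set_eq, Nat.card_coe_set_eq, compsOn]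

lemma news_no_old {t : ℕ} {i : ℕ} {D : Set (Pt n)}
    (hD : D ∈ M.clusterings {v : Pt n | (v.1 : ℕ) < t} i)
    (hnew : ¬ ∃ C ∈ M.acSet {v : Pt n | (v.1 : ℕ) < t - 1} i, C ⊆ D)
    {v : Pt n} (hv : v ∈ D) (hlev : i ≤ M.level v) (hold : (v.1 : ℕ) < t - 1) :
    False := by
  have hS : ({v : Pt n | (v.1 : ℕ) < t - 1} : Set (Pt n)) ⊆ {v : Pt n | (v.1 : ℕ) < t} := by
    intro x hx
    simp only [Set.mem_setOf_eq] at hx ⊢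
    omega
  have hp := M.isPart_clusterings ({v : Pt n | (v.1 : ℕ) < t - 1}) i
  obtain ⟨C, ⟨hC, hvC⟩, -⟩ := hp.2 v hold
  have hCact : C ∈ M.acSet {v : Pt n | (v.1 : ℕ) < t - 1} i := ⟨hC, M.active_of_mem hvC hlev⟩
  have hup := M.up_spec hS hC
  have hupD : M.up {v : Pt n | (v.1 : ℕ) < t} i C = D := by
    have hps := M.isPart_clusterings ({v : Pt n | (v.1 : ℕ) < t}) i
    obtain ⟨E, -, huniq⟩ := hps.2 v (hS hold)
    have h1 := huniq _ ⟨hup.1, hup.2 hvC⟩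
    have h2 := huniq D ⟨hD, hv⟩
    rw [h1, h2]
  exact hnew ⟨C, hCact, hupD ▸ hup.2⟩

lemma news_witness {t : ℕ} {i : ℕ} {D : Set (Pt n)}
    (hD : D ∈ M.acSet {v : Pt n | (v.1 : ℕ) < t} i)
    (hnew : ¬ ∃ C ∈ M.acSet {v : Pt n | (v.1 : ℕ) < t - 1} i, C ⊆ D) :
    ∃ v ∈ D, i ≤ M.level v ∧ (v.1 : ℕ) = t - 1 := by
  have hp := M.isPart_clusterings ({v : Pt n | (v.1 : ℕ) < t}) i
  obtain ⟨v, hv, hlev⟩ := M.clLevel_witness (hp.1 D hD.1).2 hD.2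
  refine ⟨v, hv, hlev, ?_⟩
  have hvt : (v.1 : ℕ) < t := (hp.1 D hD.1).1 hv
  by_contra hne
  exact M.news_no_old hD.1 hnew hv hlev (by omega)

end SFI

namespace SFI

variable {n : ℕ} (M : SFI n)

lemma sep' {S : Set (Pt n)} {i : ℕ} {D D' : Set (Pt n)}
    (hD : D ∈ M.clusterings S i) (hD' : D' ∈ M.clusterings S i)
    (hne : D ≠ D') {v w : Pt n} (hv : v ∈ D) (hw : w ∈ D')
    (hlv : i ≤ M.level v) (hlw : i ≤ M.level w) (hvw : v ≠ w) :
    (2 : ℝ) ^ i ≤ M.dist v w := by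
  cases i with
  | zero => simpa using M.one_le_dist v w hvw
  | succ j =>
    exact M.sep hD hD' hne hv hw (by omega) (by omega)

lemma mate_far {i : ℕ} {v : Pt n} (hlev : i ≤ M.level v) :
    (2 : ℝ) ^ i / 2 < M.dist v (mate v) := by
  cases i with
  | zero =>
    have := M.one_le_dist_mate v
    norm_num
    linarith
  | succ j =>
    have h1 := M.dist_mate_gt_of_level (v := v) (j := j) hlev
    have h2 : (2 : ℝ) ^ (j + 1) / 2 = 2 ^ j := by ring
    linarith

end SFI

/-- There is a universal constant `c > 0` such that for every online
Steiner forest instance with `n` demand pairs the following holds. Run the clustering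
procedure on each prefix instance (the prefix terminal set after arrival `t` is
`{v | v.1 < t}`; for `t = 0` everything is empty, and beyond the top level the
clusterings are constant and the virtual graphs empty — both automatic here). Suppose
for each arrival `t ∈ [1, n]` and level `i`, `Finh t i` is a spanning forest of the
subgraph of `H^{(t)}_i` induced by the virtual edges inherited from `Fhat (t-1) i`, and
`Fhat t i` is a spanning forest of `H^{(t)}_i` containing `Finh t i`. Then for every
level `i`, `Σ_{t=1}^{n} |F̂^{(t)}_i \ F̂^{(t)}_{inh,i}| · 2^{i+1} ≤ c · OPT_n`. -/
theorem stmt9 :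
    ∃ c : ℝ, 0 < c ∧
      ∀ (n : ℕ) (M : SFI n)
        (Fhat Finh : ℕ → ℕ → SimpleGraph (Set (SFI.Pt n))),
        (∀ i, Fhat 0 i = ⊥) →
        (∀ t, 1 ≤ t → t ≤ n → ∀ i,
          SFI.IsSpanningForest
            (M.inhG {v : SFI.Pt n | (v.1 : ℕ) < t} i (Fhat (t - 1) i)) (Finh t i) ∧
          SFI.IsSpanningForest (M.virtG {v : SFI.Pt n | (v.1 : ℕ) < t} i) (Fhat t i) ∧
          Finh t i ≤ Fhat t i) →
        ∀ i, ∑ t ∈ Finset.Icc 1 n,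
            (((Fhat t i).edgeSet \ (Finh t i).edgeSet).ncard : ℝ) * 2 ^ (i + 1)
          ≤ c * M.OPT := by
  refine ⟨8, by norm_num, ?_⟩
  intro n M Fhat Finh h0 hσ i
  classical
  have hOPT0 : 0 ≤ M.OPT := M.le_OPT_of_forall (fun F _ => M.cost_nonneg F)
  rcases Nat.eq_zero_or_pos n with rfl | hn
  · rw [show Finset.Icc 1 0 = (∅ : Finset ℕ) from rfl, Finset.sum_empty]
    linarith
  haveI : Nonempty (SFI.Pt n) := ⟨(⟨0, hn⟩, false)⟩
  -- abbreviations
  set newE : ℕ → ℕ := fun t => ((Fhat t i).edgeSet \ (Finh t i).edgeSet).ncard with hnewE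
  set k : ℕ → ℕ := fun t =>
    compsOn (M.virtG {v : SFI.Pt n | (v.1 : ℕ) < t} i)
      (M.acSet {v : SFI.Pt n | (v.1 : ℕ) < t} i) with hk
  set news : ℕ → Set (Set (SFI.Pt n)) := fun t =>
    {D | D ∈ M.acSet {v : SFI.Pt n | (v.1 : ℕ) < t} i ∧
      ¬ ∃ C ∈ M.acSet {v : SFI.Pt n | (v.1 : ℕ) < t - 1} i, C ⊆ D} with hnews
  set b : ℕ → ℕ := fun t => (news t).ncard with hb
  -- base facts at time 0
  have hpS0 : ({v : SFI.Pt n | (v.1 : ℕ) < 0} : Set (SFI.Pt n)) = ∅ := by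
    ext v; simp
  have hvbot : M.virtG {v : SFI.Pt n | (v.1 : ℕ) < 0} i = ⊥ := by
    ext C₁ C₂
    simp only [SimpleGraph.bot_adj, iff_false]
    intro h
    have hmem := h.1
    rw [hpS0, M.clusterings_empty] at hmem
    exact hmem
  have hsf : ∀ t, t ≤ n →
      SFI.IsSpanningForest (M.virtG {v : SFI.Pt n | (v.1 : ℕ) < t} i) (Fhat t i) := by
    intro t ht
    rcases Nat.eq_zero_or_pos t with rfl | hpos
    · rw [hvbot, h0 i]
      exact ⟨le_refl _, SimpleGraph.isAcyclic_bot, fun a b => Iff.rfl⟩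
    · exact (hσ t hpos ht i).2.1
  have hSmono : ∀ t : ℕ, ({v : SFI.Pt n | (v.1 : ℕ) < t - 1} : Set (SFI.Pt n))
      ⊆ {v : SFI.Pt n | (v.1 : ℕ) < t} := by
    intro t v hv
    simp only [Set.mem_setOf_eq] at hv ⊢
    omega
  -- per-arrival inequality
  have key : ∀ t, 1 ≤ t → t ≤ n → newE t + k t ≤ k (t - 1) + b t := by
    intro t h1 h2
    obtain ⟨hFi, hFh, hle⟩ := hσ t h1 h2 i
    have hA := M.count_forest hFi hFh hle
    have hB := M.comps_transfer (hSmono t) (hsf (t - 1) (by omega))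
    simp only [hnewE, hk, hb, hnews]
    omega
  -- k 0 = 0
  have hac0 : M.acSet {v : SFI.Pt n | (v.1 : ℕ) < 0} i = ∅ := by
    ext C
    simp only [SFI.acSet, Set.mem_setOf_eq, Set.mem_empty_iff_false, iff_false, not_and]
    intro hC
    rw [hpS0, M.clusterings_empty] at hC
    exact absurd hC (Set.notMem_empty C)
  have hk0 : k 0 = 0 := by
    simp only [hk]
    rw [compsOn, hac0, Set.image_empty, Set.ncard_empty]
  -- telescoping
  have tele : ∀ N, N ≤ n →
      (∑ t ∈ Finset.Icc 1 N, newE t) + k N ≤ ∑ t ∈ Finset.Icc 1 N, b t := by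
    intro N
    induction N with
    | zero => intro _; simp [hk0]
    | succ N ih =>
      intro hN
      have hins : Finset.Icc 1 (N + 1) = insert (N + 1) (Finset.Icc 1 N) :=
        (Finset.insert_Icc_right_eq_Icc_add_one (by omega)).symm
      have hnotmem : (N + 1) ∉ Finset.Icc 1 N := by
        simp [Finset.mem_Icc]
      rw [hins, Finset.sum_insert hnotmem, Finset.sum_insert hnotmem]
      have h1 := key (N + 1) (by omega) hN
      have h2 := ih (by omega)
      have h3 : (N + 1) - 1 = N := rfl
      rw [h3] at h1
      omega
  -- the special terminals
  set wit : ℕ → Set (SFI.Pt n) → SFI.Pt n := fun t D =>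
    if h : ∃ v, v ∈ D ∧ i ≤ M.level v ∧ (v.1 : ℕ) = t - 1 then h.choose
    else Classical.arbitrary _ with hwitdef
  have hwit : ∀ t, ∀ D ∈ news t, wit t D ∈ D ∧ i ≤ M.level (wit t D) ∧
      ((wit t D).1 : ℕ) = t - 1 := by
    intro t D hD
    obtain ⟨hDa, hnew⟩ := hD
    obtain ⟨v, hv, h2, h3⟩ := M.news_witness hDa hnew
    have h : ∃ v, v ∈ D ∧ i ≤ M.level v ∧ (v.1 : ℕ) = t - 1 := ⟨v, hv, h2, h3⟩
    rw [hwitdef]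
    simp only []
    rw [dif_pos h]
    exact h.choose_spec
  set setT : ℕ → Set (SFI.Pt n) := fun t => (wit t) '' (news t) with hsetT
  have hsetTcard : ∀ t, (setT t).ncard = b t := by
    intro t
    rw [hsetT]
    simp only []
    rw [hb]
    apply Set.ncard_image_of_injOn
    intro D hD D' hD' heq
    have h1 := hwit t D hD
    have h2 := hwit t D' hD'
    have hp := M.isPart_clusterings ({v : SFI.Pt n | (v.1 : ℕ) < t}) i
    have hvS : wit t D ∈ ({v : SFI.Pt n | (v.1 : ℕ) < t} : Set (SFI.Pt n)) :=
      (hp.1 D hD.1.1).1 h1.1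
    obtain ⟨E, -, huniq⟩ := hp.2 _ hvS
    rw [huniq D ⟨hD.1.1, h1.1⟩, huniq D' ⟨hD'.1.1, heq ▸ h2.1⟩]
  -- members of setT t have first coordinate t - 1
  have hsetTco : ∀ t, ∀ v ∈ setT t, i ≤ M.level v ∧ (v.1 : ℕ) = t - 1 := by
    rintro t v ⟨D, hD, rfl⟩
    exact ⟨(hwit t D hD).2.1, (hwit t D hD).2.2⟩
  -- counting the union
  have hUcard : ∀ N, N ≤ n → (∑ t ∈ Finset.Icc 1 N, b t)
      ≤ (⋃ t ∈ Finset.Icc 1 N, setT t).ncard := by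
    intro N
    induction N with
    | zero => intro _; simp
    | succ N ih =>
      intro hN
      have hins : Finset.Icc 1 (N + 1) = insert (N + 1) (Finset.Icc 1 N) :=
        (Finset.insert_Icc_right_eq_Icc_add_one (by omega)).symm
      have hnotmem : (N + 1) ∉ Finset.Icc 1 N := by
        simp [Finset.mem_Icc]
      rw [hins, Finset.sum_insert hnotmem, Finset.set_biUnion_insert]
      have hdisj : Disjoint (setT (N + 1)) (⋃ t ∈ Finset.Icc 1 N, setT t) := by
        rw [Set.disjoint_left]
        rintro v hv1 hv2
        obtain ⟨t, ht, hvt⟩ := Set.mem_iUnion₂.mp hv2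
        have e1 := (hsetTco (N + 1) v hv1).2
        have e2 := (hsetTco t v hvt).2
        rw [Finset.mem_Icc] at ht
        omega
      rw [Set.ncard_union_eq hdisj (Set.toFinite _) (Set.toFinite _)]
      have := ih (by omega)
      have hcardT := hsetTcard (N + 1)
      omega
  -- level and separation properties of the union
  set U : Set (SFI.Pt n) := ⋃ t ∈ Finset.Icc 1 n, setT t with hU
  have hUlev : ∀ v ∈ U, i ≤ M.level v := by
    intro v hv
    obtain ⟨t, -, hvt⟩ := Set.mem_iUnion₂.mp hv
    exact (hsetTco t v hvt).1
  have hsepmain : ∀ s t, s ≤ t → 1 ≤ s → t ≤ n →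
      ∀ v ∈ setT s, ∀ w ∈ setT t, v ≠ w → (2 : ℝ) ^ i ≤ M.dist v w := by
    intro s t hst hs ht v hv w hw hvw
    obtain ⟨Dv, hDv, rfl⟩ := hv
    obtain ⟨Dw, hDw, rfl⟩ := hw
    have h1 := hwit s Dv hDv
    have h2 := hwit t Dw hDw
    rcases eq_or_lt_of_le hst with rfl | hlt
    · -- same arrival time
      have hne : Dv ≠ Dw := by
        rintro rfl
        exact hvw rfl
      exact M.sep' hDv.1.1 hDw.1.1 hne h1.1 h2.1 h1.2.1 h2.2.1 hvw
    · -- different arrival times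
      have hvin : wit s Dv ∈ ({v : SFI.Pt n | (v.1 : ℕ) < t} : Set (SFI.Pt n)) := by
        simp only [Set.mem_setOf_eq]
        omega
      have hp := M.isPart_clusterings ({v : SFI.Pt n | (v.1 : ℕ) < t}) i
      obtain ⟨E, ⟨hE, hvE⟩, -⟩ := hp.2 _ hvin
      have hne : E ≠ Dw := by
        rintro rfl
        exact M.news_no_old hDw.1.1 hDw.2 hvE h1.2.1 (by omega)
      exact M.sep' hE hDw.1.1 hne hvE h2.1 h1.2.1 h2.2.1 hvw
  have hUsep : ∀ v ∈ U, ∀ w ∈ U, v ≠ w → (2 : ℝ) ^ i ≤ M.dist v w := by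
    intro v hv w hw hvw
    obtain ⟨s, hs, hvs⟩ := Set.mem_iUnion₂.mp hv
    obtain ⟨t, ht, hwt⟩ := Set.mem_iUnion₂.mp hw
    rw [Finset.mem_Icc] at hs ht
    rcases le_total s t with h | h
    · exact hsepmain s t h hs.1 ht.2 v hvs w hwt hvw
    · rw [M.dist_symm]
      exact hsepmain t s h ht.1 hs.2 w hwt v hvs hvw.symm
  have hUmate : ∀ v ∈ U, (2 : ℝ) ^ i / 2 < M.dist v (SFI.mate v) :=
    fun v hv => M.mate_far (hUlev v hv)
  -- combine the counts
  have hcount : (∑ t ∈ Finset.Icc 1 n, newE t) ≤ U.ncard := by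
    have h1 := tele n le_rfl
    have h2 := hUcard n le_rfl
    rw [← hU] at h2
    omega
  -- final numeric assembly
  have hpack : ∀ F, M.Feasible F →
      (U.ncard : ℝ) * ((2 : ℝ) ^ i / 2) ≤ 2 * M.cost F :=
    fun F hF => M.packing hUmate hUsep hF
  have hLHS : ∑ t ∈ Finset.Icc 1 n,
      (((Fhat t i).edgeSet \ (Finh t i).edgeSet).ncard : ℝ) * 2 ^ (i + 1)
      = ((∑ t ∈ Finset.Icc 1 n, newE t : ℕ) : ℝ) * 2 ^ (i + 1) := by
    rw [← Finset.sum_mul]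
    congr 1
    rw [Nat.cast_sum]
  rw [hLHS]
  have hXle : ((∑ t ∈ Finset.Icc 1 n, newE t : ℕ) : ℝ) ≤ (U.ncard : ℝ) := by
    exact_mod_cast hcount
  have hfinal : ∀ F, M.Feasible F →
      ((∑ t ∈ Finset.Icc 1 n, newE t : ℕ) : ℝ) * 2 ^ (i + 1) ≤ 8 * M.cost F := by
    intro F hF
    have hp := hpack F hF
    have hpow : (2 : ℝ) ^ (i + 1) = 4 * ((2 : ℝ) ^ i / 2) := by
      rw [pow_succ]; ring
    have hpos : (0 : ℝ) < (2 : ℝ) ^ i / 2 := by positivity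
    calc ((∑ t ∈ Finset.Icc 1 n, newE t : ℕ) : ℝ) * 2 ^ (i + 1)
        ≤ (U.ncard : ℝ) * 2 ^ (i + 1) := by
          apply mul_le_mul_of_nonneg_right hXle
          positivity
      _ = 4 * ((U.ncard : ℝ) * ((2 : ℝ) ^ i / 2)) := by rw [hpow]; ring
      _ ≤ 4 * (2 * M.cost F) := by linarith
      _ = 8 * M.cost F := by ring
  have hdiv : ((∑ t ∈ Finset.Icc 1 n, newE t : ℕ) : ℝ) * 2 ^ (i + 1) / 8 ≤ M.OPT := by
    apply M.le_OPT_of_forall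
    intro F hF
    have := hfinal F hF
    linarith
  linarith
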